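/- arXiv:1911.10302 — 2 statements merged into one kernel-verified Lean document; each statement's English description precedes it below -/
import Mathlib

section
/- Let K be a nowhere-vanishing Killing field on ℝ³ and let (u,p) be a smooth solution of the incompressible Euler equations on I × ℝ³ with [K, u(t,·)] = 0 for every t ∈ I. Suppose the vorticity has the form curlₓ u(t,x) = φ(t,x) K(x) for a smooth function φ : I × ℝ³ → ℝ. Then φ is transported by the flow: ∂ₜφ + ⟨u, ∇ₓφ⟩ = 0 on I × ℝ³. -/
/-!
Taking the curl of the momentum equation gives the vorticity equation `Dω/Dt = Du ω` for
`ω = curl u`, where `D/Dt = ∂ₜ + u·∇` is the material derivative: the pressure drops out by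
symmetry of second derivatives, and the quadratic term `curl ((u·∇)u)` reduces to `-Du ω`
since `div u = 0`. For `ω = φ K` the product rule gives `Dω/Dt = (Dφ/Dt) K + φ DK u`, while
`Du ω = φ Du K = φ DK u` because `[K, u] = 0`. Hence `(Dφ/Dt) K = 0`, and `K` vanishes nowhere.
-/

noncomputable section

/-- Vectors in ℝ³. -/
abbrev V3 : Type := Fin 3 → ℝ

/-- Euclidean inner product on ℝ³. -/
def dot3 (u v : V3) : ℝ := ∑ i, u i * v i

/-- Cross product on ℝ³. -/
def cross3 (u v : V3) : V3 :=
  ![u 1 * v 2 - u 2 * v 1, u 2 * v 0 - u 0 * v 2, u 0 * v 1 - u 1 * v 0]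

/-- Partial derivative ∂ᵢ of a scalar function. -/
def pd (i : Fin 3) (f : V3 → ℝ) (x : V3) : ℝ := fderiv ℝ f x (Pi.single i 1)

/-- Gradient of a scalar function. -/
def grad3 (f : V3 → ℝ) (x : V3) : V3 := fun i => pd i f x

/-- Divergence of a vector field. -/
def div3 (X : V3 → V3) (x : V3) : ℝ := ∑ i, fderiv ℝ X x (Pi.single i 1) i

/-- Curl of a vector field. -/
def curl3 (X : V3 → V3) (x : V3) : V3 :=
  ![pd 1 (fun y => X y 2) x - pd 2 (fun y => X y 1) x,
    pd 2 (fun y => X y 0) x - pd 0 (fun y => X y 2) x,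
    pd 0 (fun y => X y 1) x - pd 1 (fun y => X y 0) x]

/-- Lie bracket of vector fields: [X,Y](x) = DY(x)X(x) − DX(x)Y(x). -/
def bracket3 (X Y : V3 → V3) (x : V3) : V3 := fderiv ℝ Y x (X x) - fderiv ℝ X x (Y x)

/-- `K` is a Killing field of the Euclidean metric on `U`: `DK(x)` is antisymmetric on `U`. -/
def IsKillingOn (K : V3 → V3) (U : Set V3) : Prop :=
  ∀ x ∈ U, ∀ v w : V3, dot3 (fderiv ℝ K x v) w + dot3 v (fderiv ℝ K x w) = 0

/-- `(u,p)` solves the incompressible Euler equations on `I × ℝ³`: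
∂ₜu + (Dₓu)u = −∇ₓp and divₓ u = 0. -/
def IsEulerSolution (I : Set ℝ) (u : ℝ → V3 → V3) (p : ℝ → V3 → ℝ) : Prop :=
  (∀ t ∈ I, ∀ x : V3, deriv (fun s => u s x) t + fderiv ℝ (u t) x (u t x)
      = -grad3 (p t) x) ∧
  (∀ t ∈ I, ∀ x : V3, div3 (u t) x = 0)

open Function Filter Topology

def curlCLM : (V3 →L[ℝ] V3) →L[ℝ] V3 :=
  LinearMap.toContinuousLinearMap
    { toFun := fun L => ![L (Pi.single 1 1) 2 - L (Pi.single 2 1) 1,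
        L (Pi.single 2 1) 0 - L (Pi.single 0 1) 2, L (Pi.single 0 1) 1 - L (Pi.single 1 1) 0]
      map_add' := fun L M => by ext i; fin_cases i <;> simp <;> ring
      map_smul' := fun c L => by ext i; fin_cases i <;> simp <;> ring }

@[simp]
lemma curlCLM_apply (L : V3 →L[ℝ] V3) :
    curlCLM L = ![L (Pi.single 1 1) 2 - L (Pi.single 2 1) 1,
      L (Pi.single 2 1) 0 - L (Pi.single 0 1) 2, L (Pi.single 0 1) 1 - L (Pi.single 1 1) 0] :=
  rfl

lemma apply_eq_sum_apply_single (L : V3 →L[ℝ] V3) (v : V3) (i : Fin 3) :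
    L v i = ∑ j, v j * L (Pi.single j 1) i := by
  conv_lhs => rw [pi_eq_sum_univ' v]
  simp [map_sum, Finset.sum_apply]

lemma curlCLM_comp_self (L : V3 →L[ℝ] V3) :
    curlCLM (L.comp L) = (∑ i, L (Pi.single i 1) i) • curlCLM L - L (curlCLM L) := by
  ext i
  fin_cases i <;>
  simp [apply_eq_sum_apply_single L (L _), apply_eq_sum_apply_single L ![_, _, _],
    Fin.sum_univ_three] <;> ring

lemma curlCLM_eq_zero_of_symm {L : V3 →L[ℝ] V3}
    (hL : ∀ i j, L (Pi.single i 1) j = L (Pi.single j 1) i) : curlCLM L = 0 := by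
  ext i; fin_cases i <;> simp [hL 1 2, hL 2 0, hL 0 1]

lemma curl3_eq_curlCLM_fderiv {X : V3 → V3} {x : V3} (hX : DifferentiableAt ℝ X x) :
    curl3 X x = curlCLM (fderiv ℝ X x) := by
  simp [curl3, pd, fderiv_apply hX]

lemma dot3_grad3 (f : V3 → ℝ) (x v : V3) : dot3 v (grad3 f x) = fderiv ℝ f x v := by
  conv_rhs => rw [pi_eq_sum_univ' v]
  simp [dot3, grad3, pd, map_sum, smul_eq_mul]

section Slices

open ContinuousLinearMap

variable {𝕜 E F : Type*} [NontriviallyNormedField 𝕜]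
  [NormedAddCommGroup E] [NormedSpace 𝕜 E] [NormedAddCommGroup F] [NormedSpace 𝕜 F]
  {f : 𝕜 → E → F} {t : 𝕜} {x : E}

lemma fderiv_slice_eq_comp_inr (hf : DifferentiableAt 𝕜 (uncurry f) (t, x)) :
    fderiv 𝕜 (f t) x = (fderiv 𝕜 (uncurry f) (t, x)).comp (inr 𝕜 𝕜 E) :=
  (hf.hasFDerivAt.comp x (hasFDerivAt_prodMk_right t x)).fderiv

lemma differentiableAt_slice (hf : DifferentiableAt 𝕜 (uncurry f) (t, x)) :
    DifferentiableAt 𝕜 (f t) x :=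
  hf.comp x ((hasFDerivAt_prodMk_right t x).differentiableAt)

lemma deriv_slice_eq_fderiv_uncurry (hf : DifferentiableAt 𝕜 (uncurry f) (t, x)) :
    deriv (fun s => f s x) t = fderiv 𝕜 (uncurry f) (t, x) (1, 0) := by
  have h := hf.hasFDerivAt.comp t (hasFDerivAt_prodMk_left (𝕜 := 𝕜) t x)
  exact h.hasDerivAt.deriv

lemma deriv_slice_add_fderiv_slice (hf : DifferentiableAt 𝕜 (uncurry f) (t, x)) (v : E) :
    deriv (fun s => f s x) t + fderiv 𝕜 (f t) x v = fderiv 𝕜 (uncurry f) (t, x) (1, v) := by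
  rw [deriv_slice_eq_fderiv_uncurry hf, fderiv_slice_eq_comp_inr hf,
    ContinuousLinearMap.comp_apply, inr_apply, ← map_add, Prod.mk_add_mk, add_zero, zero_add]

end Slices

def spatialGrad : (ℝ × V3 →L[ℝ] ℝ) →L[ℝ] V3 :=
  ContinuousLinearMap.pi fun i => ContinuousLinearMap.apply ℝ ℝ (0, Pi.single i 1)

lemma grad3_eq_spatialGrad {p : ℝ → V3 → ℝ} {t : ℝ} {x : V3}
    (hp : DifferentiableAt ℝ (uncurry p) (t, x)) :
    grad3 (p t) x = spatialGrad (fderiv ℝ (uncurry p) (t, x)) := by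
  ext i
  simp [grad3, pd, spatialGrad, fderiv_slice_eq_comp_inr hp]

lemma curlCLM_spatialGrad_comp_inr_eq_zero {B : ℝ × V3 →L[ℝ] ℝ × V3 →L[ℝ] ℝ}
    (hB : ∀ v w, B v w = B w v) :
    curlCLM ((spatialGrad.comp B).comp (ContinuousLinearMap.inr ℝ ℝ V3)) = 0 :=
  curlCLM_eq_zero_of_symm fun i j => by simp [spatialGrad, hB]

namespace IsEulerSolution

variable {I : Set ℝ} {u : ℝ → V3 → V3} {p : ℝ → V3 → ℝ}

open ContinuousLinearMap

lemma momentum_uncurry (h : IsEulerSolution I u p) {t : ℝ} (ht : t ∈ I) {x : V3}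
    (hu : DifferentiableAt ℝ (uncurry u) (t, x)) (hp : DifferentiableAt ℝ (uncurry p) (t, x)) :
    fderiv ℝ (uncurry u) (t, x) (1, u t x) + spatialGrad (fderiv ℝ (uncurry p) (t, x)) = 0 := by
  rw [← deriv_slice_add_fderiv_slice hu, h.1 t ht x, grad3_eq_spatialGrad hp, neg_add_cancel]

lemma fderiv_momentum_uncurry (h : IsEulerSolution I u p) (hI : IsOpen I)
    (hu : ContDiffOn ℝ 2 (uncurry u) (I ×ˢ Set.univ))
    (hp : ContDiffOn ℝ 2 (uncurry p) (I ×ˢ Set.univ))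
    {q : ℝ × V3} (hq : q ∈ I ×ˢ Set.univ) (w : ℝ × V3) :
    fderiv ℝ (fderiv ℝ (uncurry u)) q w (1, uncurry u q)
      + fderiv ℝ (uncurry u) q (0, fderiv ℝ (uncurry u) q w)
      + spatialGrad (fderiv ℝ (fderiv ℝ (uncurry p)) q w) = 0 := by
  have hS : IsOpen (I ×ˢ (Set.univ : Set V3)) := hI.prod isOpen_univ
  have hu' := hu.contDiffAt (hS.mem_nhds hq)
  have hp' := hp.contDiffAt (hS.mem_nhds hq)
  have hmomentum : (fun q' => fderiv ℝ (uncurry u) q' (1, uncurry u q')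
      + spatialGrad (fderiv ℝ (uncurry p) q')) =ᶠ[𝓝 q] fun _ => 0 := by
    filter_upwards [hS.mem_nhds hq] with ⟨t, x⟩ hq'
    exact h.momentum_uncurry hq'.1
      ((hu.contDiffAt (hS.mem_nhds hq')).differentiableAt two_ne_zero)
      ((hp.contDiffAt (hS.mem_nhds hq')).differentiableAt two_ne_zero)
  have hderiv :=
    ((hu'.fderiv_right (m := 1) le_rfl).differentiableAt one_ne_zero).hasFDerivAt.clm_apply
      ((hasFDerivAt_const (1 : ℝ) q).prodMk (hu'.differentiableAt two_ne_zero).hasFDerivAt)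
    |>.add (spatialGrad.hasFDerivAt.comp q
      ((hp'.fderiv_right (m := 1) le_rfl).differentiableAt one_ne_zero).hasFDerivAt)
  have := congrArg (· w) (hderiv.unique ((hasFDerivAt_const 0 q).congr_of_eventuallyEq hmomentum))
  simpa [add_comm] using this


lemma vorticity_equation (h : IsEulerSolution I u p) (hI : IsOpen I)
    (hu : ContDiffOn ℝ 2 (uncurry u) (I ×ˢ Set.univ))
    (hp : ContDiffOn ℝ 2 (uncurry p) (I ×ˢ Set.univ)) {t : ℝ} (ht : t ∈ I) (x : V3) :
    fderiv ℝ (uncurry fun s => curl3 (u s)) (t, x) (1, u t x)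
      = fderiv ℝ (u t) x (curl3 (u t) x) := by
  have hS : IsOpen (I ×ˢ (Set.univ : Set V3)) := hI.prod isOpen_univ
  have hq : (t, x) ∈ I ×ˢ (Set.univ : Set V3) := ⟨ht, trivial⟩
  have hu' := hu.contDiffAt (hS.mem_nhds hq)
  have hp' := hp.contDiffAt (hS.mem_nhds hq)
  set A := fderiv ℝ (uncurry u) (t, x)
  set B := fderiv ℝ (fderiv ℝ (uncurry u)) (t, x)
  set Ax := A.comp (inr ℝ ℝ V3)
  let restrict : (ℝ × V3 →L[ℝ] V3) →L[ℝ] V3 →L[ℝ] V3 :=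
    (compL ℝ V3 (ℝ × V3) V3).flip (inr ℝ ℝ V3)
  have hcurl : uncurry (fun s => curl3 (u s)) =ᶠ[𝓝 (t, x)]
      fun q => curlCLM (restrict (fderiv ℝ (uncurry u) q)) := by
    filter_upwards [hS.mem_nhds hq] with ⟨s, y⟩ hq'
    have hd := (hu.contDiffAt (hS.mem_nhds hq')).differentiableAt two_ne_zero
    simp only [uncurry_apply_pair, restrict, compL_apply, flip_apply]
    rw [curl3_eq_curlCLM_fderiv (differentiableAt_slice hd), fderiv_slice_eq_comp_inr hd]
  -- By symmetry of `B`, the left side is the spatial derivative of `∂ₜu + Du u`.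
  have hB : (B (1, u t x)).comp (inr ℝ ℝ V3) = -Ax.comp Ax
      - (spatialGrad.comp (fderiv ℝ (fderiv ℝ (uncurry p)) (t, x))).comp (inr ℝ ℝ V3) := by
    ext1 v
    have hsymm : B (1, u t x) (0, v) = B (0, v) (1, u t x) :=
      hu'.isSymmSndFDerivAt (by simp) (1, u t x) (0, v)
    have hmomentum : B (0, v) (1, u t x) + A (0, A (0, v))
        + spatialGrad (fderiv ℝ (fderiv ℝ (uncurry p)) (t, x) (0, v)) = 0 :=
      fderiv_momentum_uncurry h hI hu hp hq (0, v)
    show B (1, u t x) (0, v) = -A (0, A (0, v))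
      - spatialGrad (fderiv ℝ (fderiv ℝ (uncurry p)) (t, x) (0, v))
    rw [hsymm]
    linear_combination (norm := module) hmomentum
  have hdiv : ∑ i, Ax (Pi.single i 1) i = 0 := by
    have := h.2 t ht x
    rwa [div3, fderiv_slice_eq_comp_inr (hu'.differentiableAt two_ne_zero)] at this
  rw [(curlCLM.comp restrict).hasFDerivAt.comp (t, x)
      ((hu'.fderiv_right (m := 1) le_rfl).differentiableAt one_ne_zero).hasFDerivAt
      |>.congr_of_eventuallyEq hcurl |>.fderiv]
  change curlCLM ((B (1, u t x)).comp (inr ℝ ℝ V3)) = _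
  rw [hB, map_sub, map_neg, curlCLM_comp_self, hdiv, zero_smul, zero_sub, neg_neg,
    curlCLM_spatialGrad_comp_inr_eq_zero (hp'.isSymmSndFDerivAt (by simp)), sub_zero,
    curl3_eq_curlCLM_fderiv (differentiableAt_slice (hu'.differentiableAt two_ne_zero)),
    fderiv_slice_eq_comp_inr (hu'.differentiableAt two_ne_zero)]

end IsEulerSolution

theorem vorticity_factor_transported_general (I : Set ℝ) (hIopen : IsOpen I)
    (K : V3 → V3) (hKsmooth : ContDiff ℝ (⊤ : ℕ∞) K)
    (hKne : ∀ x : V3, K x ≠ 0)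
    (u : ℝ → V3 → V3) (p : ℝ → V3 → ℝ)
    (hu : ContDiffOn ℝ (⊤ : ℕ∞) (fun q : ℝ × V3 => u q.1 q.2) (I ×ˢ (Set.univ : Set V3)))
    (hp : ContDiffOn ℝ (⊤ : ℕ∞) (fun q : ℝ × V3 => p q.1 q.2) (I ×ˢ (Set.univ : Set V3)))
    (heuler : IsEulerSolution I u p)
    (haxi : ∀ t ∈ I, ∀ x : V3, bracket3 K (u t) x = 0)
    (φ : ℝ → V3 → ℝ)
    (hφ : ContDiffOn ℝ (⊤ : ℕ∞) (fun q : ℝ × V3 => φ q.1 q.2) (I ×ˢ (Set.univ : Set V3)))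
    (hvort : ∀ t ∈ I, ∀ x : V3, curl3 (u t) x = φ t x • K x) :
    ∀ t ∈ I, ∀ x : V3,
      deriv (fun s => φ s x) t + dot3 (u t x) (grad3 (φ t) x) = 0 := by
  intro t ht x
  have hS : IsOpen (I ×ˢ (Set.univ : Set V3)) := hIopen.prod isOpen_univ
  have hq : (t, x) ∈ I ×ˢ (Set.univ : Set V3) := ⟨ht, trivial⟩
  have hle : ((2 : ℕ∞) : WithTop ℕ∞) ≤ (⊤ : ℕ∞) := WithTop.coe_le_coe.mpr le_top
  have hφd : DifferentiableAt ℝ (uncurry φ) (t, x) :=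
    (hφ.contDiffAt (hS.mem_nhds hq)).differentiableAt (by simp)
  have hKd : DifferentiableAt ℝ K x := hKsmooth.differentiable (by simp) x
  have hcurl : uncurry (fun s => curl3 (u s)) =ᶠ[𝓝 (t, x)] fun q => φ q.1 q.2 • K q.2 := by
    filter_upwards [hS.mem_nhds hq] with q hq' using hvort q.1 hq'.1 q.2
  have hproduct : fderiv ℝ (uncurry fun s => curl3 (u s)) (t, x) (1, u t x)
      = fderiv ℝ (uncurry φ) (t, x) (1, u t x) • K x + φ t x • fderiv ℝ K x (u t x) := by
    have hd := hφd.hasFDerivAt.smul (hKd.hasFDerivAt.comp (t, x) hasFDerivAt_snd)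
    rw [hcurl.fderiv_eq,
      show fderiv ℝ (fun q : ℝ × V3 => φ q.1 q.2 • K q.2) (t, x) = _ from hd.fderiv]
    simp [add_comm]
  have hcommute : fderiv ℝ (u t) x (K x) = fderiv ℝ K x (u t x) :=
    sub_eq_zero.mp (haxi t ht x)
  have htransport : fderiv ℝ (uncurry φ) (t, x) (1, u t x) • K x = 0 := by
    have := heuler.vorticity_equation hIopen (hu.of_le hle) (hp.of_le hle) ht x
    rw [hproduct, hvort t ht x, map_smul, hcommute, add_eq_right] at this
    exact this
  rw [dot3_grad3, deriv_slice_add_fderiv_slice hφd]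
  exact (smul_eq_zero.mp htransport).resolve_right (hKne x)

/-- if K is a nowhere-vanishing Killing field, (u,p) a smooth axisymmetric
Euler solution whose vorticity has the form curlₓ u = φ K, then φ is transported by the
flow: ∂ₜφ + ⟨u, ∇ₓφ⟩ = 0. -/
theorem vorticity_factor_transported (I : Set ℝ) (hIopen : IsOpen I) (hI0 : (0:ℝ) ∈ I)
    (hIconn : I.OrdConnected)
    (K : V3 → V3) (hKsmooth : ContDiff ℝ (⊤ : ℕ∞) K)
    (hKill : IsKillingOn K Set.univ) (hKne : ∀ x : V3, K x ≠ 0)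
    (u : ℝ → V3 → V3) (p : ℝ → V3 → ℝ)
    (hu : ContDiffOn ℝ (⊤ : ℕ∞) (fun q : ℝ × V3 => u q.1 q.2) (I ×ˢ (Set.univ : Set V3)))
    (hp : ContDiffOn ℝ (⊤ : ℕ∞) (fun q : ℝ × V3 => p q.1 q.2) (I ×ˢ (Set.univ : Set V3)))
    (heuler : IsEulerSolution I u p)
    (haxi : ∀ t ∈ I, ∀ x : V3, bracket3 K (u t) x = 0)
    (φ : ℝ → V3 → ℝ)
    (hφ : ContDiffOn ℝ (⊤ : ℕ∞) (fun q : ℝ × V3 => φ q.1 q.2) (I ×ˢ (Set.univ : Set V3)))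
    (hvort : ∀ t ∈ I, ∀ x : V3, curl3 (u t) x = φ t x • K x) :
    ∀ t ∈ I, ∀ x : V3,
      deriv (fun s => φ s x) t + dot3 (u t x) (grad3 (φ t) x) = 0 :=
  vorticity_factor_transported_general I hIopen K hKsmooth hKne u p hu hp heuler haxi φ hφ hvort
end
end

section
/- Let K be a nowhere-vanishing Killing field on an open set U ⊆ ℝ³. Then curl(K/|K|²) is everywhere parallel to K: (curl(K/|K|²))(x) × K(x) = 0 for all x ∈ U. -/
noncomputable section

/-!
An antisymmetric `DK(x)` acts as `v ↦ ½ curl K(x) × v`, so `∇|K|² = 2 DK(x)ᵀ K = -curl K × K`.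
With `g = |K|²` the product rule gives
`curl (K / g) = ∇(1/g) × K + (curl K) / g = g⁻² (curl K × K) × K + (curl K) / g`,
and the triple product expansion collapses this to `(⟨curl K, K⟩ / g²) K`, a multiple of `K`.
-/

open Matrix

lemma cross3_eq_crossProduct (u v : V3) : cross3 u v = u ⨯₃ v := rfl

lemma dot3_eq_dotProduct (u v : V3) : dot3 u v = u ⬝ᵥ v := rfl

section PartialDerivatives

variable {x : V3}

lemma pd_apply_eq_fderiv {K : V3 → V3} (hK : DifferentiableAt ℝ K x) (i j : Fin 3) :
    pd i (fun y => K y j) x = fderiv ℝ K x (Pi.single i 1) j := by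
  rw [pd, fderiv_apply hK]
  rfl

lemma pd_mul {f h : V3 → ℝ} (hf : DifferentiableAt ℝ f x) (hh : DifferentiableAt ℝ h x)
    (i : Fin 3) : pd i (fun y => f y * h y) x = pd i f x * h x + f x * pd i h x := by
  simp only [pd, fderiv_fun_mul hf hh, _root_.add_apply, _root_.smul_apply, smul_eq_mul]
  ring

lemma grad3_inv {f : V3 → ℝ} (hf : DifferentiableAt ℝ f x) (hfx : f x ≠ 0) :
    grad3 (fun y => (f y)⁻¹) x = -(f x ^ 2)⁻¹ • grad3 f x := by
  ext i
  rw [grad3, pd, fderiv_fun_comp x (differentiableAt_inv hfx) hf, fderiv_inv]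
  simp [grad3, pd, mul_comm]

lemma pd_dot3 {K L : V3 → V3} (hK : DifferentiableAt ℝ K x) (hL : DifferentiableAt ℝ L x)
    (i : Fin 3) : pd i (fun y => dot3 (K y) (L y)) x =
      dot3 (fderiv ℝ K x (Pi.single i 1)) (L x) + dot3 (K x) (fderiv ℝ L x (Pi.single i 1)) := by
  have hsum := HasFDerivAt.fun_sum (u := Finset.univ) fun j _ =>
    (hasFDerivAt_pi'.1 hK.hasFDerivAt j).fun_mul (hasFDerivAt_pi'.1 hL.hasFDerivAt j)
  simp only [pd, dot3]
  rw [hsum.fderiv]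
  simp [Finset.sum_add_distrib, mul_comm, add_comm]

lemma curl3_smul {f : V3 → ℝ} {K : V3 → V3} (hf : DifferentiableAt ℝ f x)
    (hK : DifferentiableAt ℝ K x) :
    curl3 (fun y => f y • K y) x = grad3 f x ⨯₃ K x + f x • curl3 K x := by
  have hpd (i j : Fin 3) : pd i (fun y => f y * K y j) x = _ :=
    pd_mul hf (differentiableAt_pi.1 hK j) i
  ext j
  fin_cases j <;>
  · simp only [curl3, grad3, cross_apply, hpd, Fin.isValue, Fin.zero_eta, Fin.mk_one,
      Fin.reduceFinMk, cons_val, cons_val_zero, cons_val_one, Nat.succ_eq_add_one, Nat.reduceAdd,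
      smul_cons, smul_empty, smul_eq_mul, Pi.smul_apply, Pi.add_apply]
    ring

end PartialDerivatives

section Antisymmetric

variable {K : V3 → V3} {x : V3}

lemma fderiv_single_apply_antisymm
    (hA : ∀ v w, dot3 (fderiv ℝ K x v) w + dot3 v (fderiv ℝ K x w) = 0) (p q : Fin 3) :
    fderiv ℝ K x (Pi.single p 1) q = -fderiv ℝ K x (Pi.single q 1) p := by
  have h := hA (Pi.single p 1) (Pi.single q 1)
  rw [dot3_eq_dotProduct, dot3_eq_dotProduct, dotProduct_single_one, single_one_dotProduct] at h
  linarith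

lemma curl3_cross_eq_two_smul_fderiv (hK : DifferentiableAt ℝ K x)
    (hA : ∀ v w, dot3 (fderiv ℝ K x v) w + dot3 v (fderiv ℝ K x w) = 0) (v : V3) :
    curl3 K x ⨯₃ v = (2 : ℝ) • fderiv ℝ K x v := by
  have hanti := fderiv_single_apply_antisymm hA
  have hdiag (p : Fin 3) : fderiv ℝ K x (Pi.single p 1) p = 0 := by
    linarith [hanti p p]
  conv_rhs => rw [pi_eq_sum_univ' v]
  ext j
  fin_cases j <;>
  · simp only [curl3, cross_apply, pd_apply_eq_fderiv hK, Fin.sum_univ_three, Fin.isValue,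
      Fin.zero_eta, Fin.mk_one, Fin.reduceFinMk, cons_val, cons_val_zero, cons_val_one,
      Nat.succ_eq_add_one, Nat.reduceAdd, map_add, map_smul, smul_eq_mul, Pi.smul_apply,
      Pi.add_apply]
    simp only [hanti 0 1, hanti 0 2, hanti 1 2, hdiag]
    ring

lemma grad3_dot3_self_eq_neg_curl3_cross (hK : DifferentiableAt ℝ K x)
    (hA : ∀ v w, dot3 (fderiv ℝ K x v) w + dot3 v (fderiv ℝ K x w) = 0) :
    grad3 (fun y => dot3 (K y) (K y)) x = -(curl3 K x ⨯₃ K x) := by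
  ext i
  have h := hA (K x) (Pi.single i 1)
  simp only [dot3_eq_dotProduct, dotProduct_single_one] at h
  rw [grad3, pd_dot3 hK hK, curl3_cross_eq_two_smul_fderiv hK hA]
  simp only [dot3_eq_dotProduct, dotProduct_comm (fderiv ℝ K x _) (K x), Pi.neg_apply,
    Pi.smul_apply, smul_eq_mul]
  linarith

theorem curl3_inv_dot3_self_smul_of_antisymm (hK : DifferentiableAt ℝ K x)
    (hA : ∀ v w, dot3 (fderiv ℝ K x v) w + dot3 v (fderiv ℝ K x w) = 0) (hKx : K x ≠ 0) :
    curl3 (fun y => (dot3 (K y) (K y))⁻¹ • K y) x =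
      (dot3 (curl3 K x) (K x) / dot3 (K x) (K x) ^ 2) • K x := by
  have hg : dot3 (K x) (K x) ≠ 0 := by
    rwa [dot3_eq_dotProduct, Ne, dotProduct_self_eq_zero]
  have hdg : DifferentiableAt ℝ (fun y => dot3 (K y) (K y)) x := by
    simp only [dot3]
    fun_prop
  rw [curl3_smul (f := fun y => (dot3 (K y) (K y))⁻¹) (hdg.inv hg) hK, grad3_inv hdg hg,
    grad3_dot3_self_eq_neg_curl3_cross hK hA, neg_smul_neg, map_smul, LinearMap.smul_apply,
    cross_cross_eq_smul_sub_smul]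
  simp only [← dot3_eq_dotProduct]
  match_scalars <;> field_simp
  ring

end Antisymmetric

/-- for a nowhere-vanishing Killing field K on an open set U ⊆ ℝ³,
curl(K/|K|²) is everywhere parallel to K: (curl(K/|K|²)) × K = 0 on U. -/
theorem curl_of_K_over_normsq_parallel (U : Set V3) (hU : IsOpen U)
    (K : V3 → V3) (hKsmooth : ContDiffOn ℝ (⊤ : ℕ∞) K U)
    (hKill : IsKillingOn K U) (hKne : ∀ x ∈ U, K x ≠ 0) :
    ∀ x ∈ U,
      cross3 (curl3 (fun y => (dot3 (K y) (K y))⁻¹ • K y) x) (K x) = 0 := by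
  intro x hx
  have hK : DifferentiableAt ℝ K x :=
    (hKsmooth.contDiffAt (hU.mem_nhds hx)).differentiableAt (by simp)
  rw [curl3_inv_dot3_self_smul_of_antisymm hK (hKill x hx) (hKne x hx), cross3_eq_crossProduct,
    map_smul, LinearMap.smul_apply, cross_self, smul_zero]
end
end
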